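/- Let 0 ≤ t < k and t + k ≤ n. Every t-(n,k) total trade T = (x₁−y₁)⋯(x_{t+1}−y_{t+1})·Σ x_{i_{t+2}}⋯x_{i_k} (sum over all (k−t−1)-subsets of X∖{x₁,y₁,...,x_{t+1},y_{t+1}}) lies in the kernel of the inclusion map ψ_k^{(k−t)}: M_k → M_t, i.e., total trades are trades. -/

import Mathlib

instance finsetUnionCommMonoid (n : ℕ) : CommMonoid (Finset (Fin n)) where
  mul := (· ∪ ·)
  one := ∅
  mul_assoc := Finset.union_assoc
  one_mul := Finset.empty_union
  mul_one := Finset.union_empty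
  mul_comm := Finset.union_comm

/-- The Boolean algebra `2^[X]` with multiplication induced by union of subsets. -/
abbrev BooleanAlg (K : Type*) [CommSemiring K] (n : ℕ) :=
  MonoidAlgebra K (Finset (Fin n))

noncomputable def el {K : Type*} [CommSemiring K] {n : ℕ} (x : Fin n) : BooleanAlg K n :=
  MonoidAlgebra.single {x} 1

/-- `Σ_m(A)`: the sum of all `m`-subsets of `A`. -/
noncomputable def Sig (K : Type*) [CommSemiring K] (n m : ℕ) (A : Finset (Fin n)) :
    BooleanAlg K n :=
  ∑ S ∈ A.powersetCard m, MonoidAlgebra.single S (1 : K)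

/-- The `t`-`(n,k)` total trade
`(x₁−y₁)⋯(x_{t+1}−y_{t+1}) · Σ_{k−t−1}(X ∖ {x₁,y₁,…,x_{t+1},y_{t+1}})`. -/
noncomputable def totalTrade (K : Type*) [Field K] (n k t : ℕ)
    (x y : Fin (t + 1) → Fin n) : BooleanAlg K n :=
  (∏ i, (el (x i) - el (y i))) *
    Sig K n (k - t - 1) ((Finset.image x Finset.univ ∪ Finset.image y Finset.univ)ᶜ)

/-- The map `ψ_k^{(k−t)}` (on the whole of `2^[X]`), sending a subset `S` to the sum of
all of its `t`-subsets; its matrix on `M_k` is the inclusion matrix `W_{t,k}`. -/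
noncomputable def psiBA (K : Type*) [Field K] (n t : ℕ) :
    BooleanAlg K n →ₗ[K] BooleanAlg K n :=
  (Finsupp.lsum K fun S : Finset (Fin n) => LinearMap.toSpanSingleton K (BooleanAlg K n)
    (∑ A ∈ S.powersetCard t, MonoidAlgebra.single A (1 : K))) ∘ₗ
    (MonoidAlgebra.coeffLinearEquiv K).toLinearMap

section helpers
open Finset

variable {K : Type*} [Field K] {n : ℕ}

lemma fmul_def (U V : Finset (Fin n)) : U * V = U ∪ V := rfl

lemma fprod_sup {α : Type*} (s : Finset α) (f : α → Finset (Fin n)) :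
    (∏ i ∈ s, f i) = s.sup f := by
  induction s using Finset.cons_induction with
  | empty => rfl
  | cons a s ha ih =>
      rw [Finset.prod_cons, Finset.sup_cons, ih]
      rfl

lemma psi_single (t : ℕ) (U : Finset (Fin n)) (c : K) :
    psiBA K n t (MonoidAlgebra.single U c) =
      ∑ A ∈ U.powersetCard t, MonoidAlgebra.single A c := by
  rw [psiBA, LinearMap.comp_apply, LinearEquiv.coe_toLinearMap,
    MonoidAlgebra.coeffLinearEquiv_apply, MonoidAlgebra.coeff_single]
  erw [Finsupp.lsum_single]
  rw [LinearMap.toSpanSingleton_apply, Finset.smul_sum]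
  exact Finset.sum_congr rfl fun A _ => by
    rw [MonoidAlgebra.smul_single', mul_one]

lemma prod_el_eq {α : Type*} (s : Finset α) (f : α → Fin n) :
    (∏ i ∈ s, el (K := K) (f i)) =
      MonoidAlgebra.single (∏ i ∈ s, ({f i} : Finset (Fin n))) (1 : K) := by
  have : ∀ i, el (K := K) (f i) = MonoidAlgebra.of K (Finset (Fin n)) {f i} := fun i => rfl
  simp_rw [this, ← map_prod]
  rfl

end helpers

section helpers2
open Finset

variable {K : Type*} [Field K] {n : ℕ}

/-- the `k`-set attached to a choice `T` of indices where we pick `x`. -/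
noncomputable def Wset {n t : ℕ} (x y : Fin (t + 1) → Fin n) (T : Finset (Fin (t + 1))) :
    Finset (Fin n) :=
  (∏ i ∈ T, ({x i} : Finset (Fin n))) * ∏ i ∈ Finset.univ \ T, {y i}

lemma mem_Wset {t : ℕ} (x y : Fin (t + 1) → Fin n) (T : Finset (Fin (t + 1))) (a : Fin n) :
    a ∈ Wset x y T ↔ (∃ j ∈ T, a = x j) ∨ ∃ j ∈ Finset.univ \ T, a = y j := by
  rw [Wset, fmul_def, Finset.mem_union, fprod_sup, fprod_sup, Finset.mem_sup, Finset.mem_sup]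
  simp [eq_comm]

lemma prod_neg' {α : Type*} (s : Finset α) (f : α → BooleanAlg K n) :
    (∏ i ∈ s, (-f i)) = (-1 : K) ^ s.card • ∏ i ∈ s, f i := by
  induction s using Finset.cons_induction with
  | empty => simp
  | cons a s ha ih =>
      rw [Finset.prod_cons, Finset.prod_cons, ih, Finset.card_cons, pow_succ,
        mul_smul_comm, mul_smul, neg_smul, one_smul, neg_mul, smul_neg]

lemma totalTrade_expand (k t : ℕ) (x y : Fin (t + 1) → Fin n) :
    totalTrade K n k t x y =
      ∑ T : Finset (Fin (t + 1)),
        ∑ S ∈ ((Finset.image x Finset.univ ∪ Finset.image y Finset.univ)ᶜ).powersetCard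
            (k - t - 1),
          MonoidAlgebra.single (Wset x y T * S)
            ((-1 : K) ^ ((Finset.univ \ T).card)) := by
  rw [totalTrade]
  simp only [sub_eq_add_neg]
  rw [Finset.prod_add, Finset.powerset_univ, Finset.sum_mul]
  refine Finset.sum_congr rfl fun T _ => ?_
  rw [Sig, Finset.mul_sum]
  refine Finset.sum_congr rfl fun S _ => ?_
  rw [prod_neg', prod_el_eq, prod_el_eq, mul_smul_comm, smul_mul_assoc,
    MonoidAlgebra.single_mul_single, MonoidAlgebra.single_mul_single, one_mul, one_mul,
    MonoidAlgebra.smul_single', mul_one, Wset]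

end helpers2

open Finset in
theorem totalTrades_are_trades {K : Type*} [Field K] [CharZero K] (n k t : ℕ)
    (htk : t < k) (hkn : t + k ≤ n)
    (x y : Fin (t + 1) → Fin n) (hinj : Function.Injective (Sum.elim x y)) :
    psiBA K n t (totalTrade K n k t x y) = 0 := by
  classical
  have hx : Function.Injective x := fun a b h => by
    simpa using hinj (show Sum.elim x y (Sum.inl a) = Sum.elim x y (Sum.inl b) from h)
  have hy : Function.Injective y := fun a b h => by
    simpa using hinj (show Sum.elim x y (Sum.inr a) = Sum.elim x y (Sum.inr b) from h)
  have hxy : ∀ a b, x a ≠ y b := fun a b h => by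
    simpa using hinj (show Sum.elim x y (Sum.inl a) = Sum.elim x y (Sum.inr b) from h)
  rw [totalTrade_expand]
  simp only [map_sum, psi_single]
  rw [Finset.sum_comm]
  refine Finset.sum_eq_zero fun S hS => ?_
  have hrw : ∀ T : Finset (Fin (t + 1)),
      (∑ A ∈ (Wset x y T * S).powersetCard t,
          MonoidAlgebra.single A ((-1 : K) ^ ((univ \ T).card)))
        = ∑ A : Finset (Fin n),
            if A ∈ (Wset x y T * S).powersetCard t then
              MonoidAlgebra.single A ((-1 : K) ^ ((univ \ T).card)) else 0 := by
    intro T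
    rw [Finset.sum_ite_mem, Finset.univ_inter]
  simp_rw [hrw]
  rw [Finset.sum_comm]
  refine Finset.sum_eq_zero fun A _ => ?_
  by_cases hA : A.card = t
  · -- find an index i with x i ∉ A and y i ∉ A
    have hEx : ∃ i : Fin (t + 1), x i ∉ A ∧ y i ∉ A := by
      by_contra h
      push_neg at h
      set φ : Fin (t + 1) → Fin n := fun j => if x j ∈ A then x j else y j with hφ
      have hφA : ∀ j, φ j ∈ A := by
        intro j; by_cases hj : x j ∈ A
        · simpa [hφ, hj] using hj
        · simpa [hφ, hj] using h j hj
      have hinjφ : Set.InjOn φ (Finset.univ : Finset (Fin (t + 1))) := by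
        intro a _ b _ hab
        by_cases h1 : x a ∈ A <;> by_cases h2 : x b ∈ A <;>
          simp only [hφ, h1, h2, if_true, if_false, if_pos, if_neg, not_false_iff] at hab
        · exact hx hab
        · exact absurd hab (hxy a b)
        · exact absurd hab.symm (hxy b a)
        · exact hy hab
      have hcard := Finset.card_le_card_of_injOn φ (fun j _ => hφA j) hinjφ
      rw [Finset.card_univ, Fintype.card_fin, hA] at hcard
      omega
    obtain ⟨i, hxi, hyi⟩ := hEx
    set g : Finset (Fin (t + 1)) → Finset (Fin (t + 1)) :=
      fun T => if i ∈ T then T.erase i else insert i T with hg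
    have hgg : ∀ T, g (g T) = T := by
      intro T
      by_cases hiT : i ∈ T
      · simp [hg, hiT, Finset.notMem_erase, Finset.insert_erase]
      · simp [hg, hiT, Finset.mem_insert, Finset.erase_insert hiT]
    have hmemg : ∀ (T : Finset (Fin (t + 1))) (j : Fin (t + 1)), j ≠ i → (j ∈ g T ↔ j ∈ T) := by
      intro T j hji
      by_cases hiT : i ∈ T <;> simp [hg, hiT, Finset.mem_erase, Finset.mem_insert, hji]
    have hkey : ∀ T, A ∈ (Wset x y T * S).powersetCard t →
        A ∈ (Wset x y (g T) * S).powersetCard t := by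
      intro T h
      rw [Finset.mem_powersetCard] at h ⊢
      refine ⟨fun a ha => ?_, h.2⟩
      have h' := h.1 ha
      rw [fmul_def, Finset.mem_union] at h' ⊢
      rcases h' with ha' | ha'
      · left
        rw [mem_Wset] at ha' ⊢
        rcases ha' with ⟨j, hj, rfl⟩ | ⟨j, hj, rfl⟩
        · have hji : j ≠ i := fun e => hxi (e ▸ ha)
          exact Or.inl ⟨j, (hmemg T j hji).2 hj, rfl⟩
        · have hji : j ≠ i := fun e => hyi (e ▸ ha)
          refine Or.inr ⟨j, ?_, rfl⟩
          rw [Finset.mem_sdiff] at hj ⊢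
          exact ⟨Finset.mem_univ _, fun hc => hj.2 ((hmemg T j hji).1 hc)⟩
      · exact Or.inr ha'
    have hsign : ∀ T : Finset (Fin (t + 1)),
        (-1 : K) ^ ((univ \ g T).card) = -(-1 : K) ^ ((univ \ T).card) := by
      intro T
      by_cases hiT : i ∈ T
      · have hset : univ \ (T.erase i) = insert i (univ \ T) := by
          ext j
          by_cases hj : j = i <;>
            simp [Finset.mem_sdiff, Finset.mem_erase, Finset.mem_insert, hj, hiT]
        rw [hg]
        simp only [if_pos hiT]
        rw [hset, Finset.card_insert_of_notMem (by simp [hiT]), pow_succ]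
        ring
      · have hset : univ \ (insert i T) = (univ \ T).erase i := by
          ext j
          simp only [Finset.mem_sdiff, Finset.mem_erase, Finset.mem_insert, Finset.mem_univ,
            true_and]
          tauto
        have hcard : (univ \ T).card = (univ \ insert i T).card + 1 := by
          rw [hset, Finset.card_erase_add_one (by simp [hiT])]
        rw [hg]
        simp only [if_neg hiT]
        rw [hcard, pow_succ]
        ring
    refine Finset.sum_ninvolution g ?_ ?_ (fun T => Finset.mem_univ _) hgg
    · intro T
      by_cases hc : A ∈ (Wset x y T * S).powersetCard t
      · rw [if_pos hc, if_pos (hkey T hc), hsign T]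
        simp [← Finsupp.single_add]
      · rw [if_neg hc, if_neg (fun hc' => hc (by have := hkey (g T) hc'; rwa [hgg] at this)),
          add_zero]
    · intro T _ hEq
      by_cases hiT : i ∈ T
      · have h1 : T.erase i = T := by simpa [hg, hiT] using hEq
        exact (Finset.erase_eq_self.mp h1) hiT
      · have h1 : insert i T = T := by simpa [hg, hiT] using hEq
        exact hiT (Finset.insert_eq_self.mp h1)
  · exact Finset.sum_eq_zero fun T _ =>
      if_neg fun hc => hA (Finset.mem_powersetCard.mp hc).2
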